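/- arXiv:2310.02858 — 4 statements merged into one kernel-verified Lean document; each statement's English description precedes it below -/
import Mathlib

section
/- Let a, b be real numbers with a > 0, b > 0 and a + b < 1, and define the cubic polynomial Q(x) = −a + a³ + 3ax − 3a²x − 3abx + 3a²bx + 3bx² − 3abx² − 3b²x² + 3ab²x² − bx³ + b³x³. Then Q has three distinct real roots, and exactly one of these roots is negative. -/
/-!
Writing `Q` as a cubic in `x`, its leading coefficient is `b³ - b < 0`, so `Q → +∞` as `x → -∞`
and `Q → -∞` as `x → +∞`. Moreover `Q 0 = -a(1 - a)(1 + a) < 0` and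
`Q 1 = (a + b)(1 - a - b)(2 - a - b) > 0`. The intermediate value theorem then gives a root in
each of `(-∞, 0)`, `(0, 1)` and `(1, ∞)`, and a cubic has no further roots, so the root in
`(-∞, 0)` is the only negative one.
-/

/-- The cubic polynomial `Q(x)` from the two-slit wedge computation, with
parameters `a`, `b` coming from the angles `θ₁ = aπ`, `θ₂ = (1-b)π`. -/
noncomputable def Q (a b x : ℝ) : ℝ :=
  -a + a^3 + 3*a*x - 3*a^2*x - 3*a*b*x + 3*a^2*b*x + 3*b*x^2 - 3*a*b*x^2
    - 3*b^2*x^2 + 3*a*b^2*x^2 - b*x^3 + b^3*x^3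

open Polynomial Filter

theorem eq_or_eq_or_eq_of_cubic_eq_zero {R : Type*} [CommRing R] [IsDomain R] {f : R → R}
    {c₃ c₂ c₁ c₀ : R} (hf : ∀ x, f x = c₃ * x ^ 3 + c₂ * x ^ 2 + c₁ * x + c₀) (h₃ : c₃ ≠ 0)
    {x₁ x₂ x₃ x : R} (h₁₂ : x₁ ≠ x₂) (h₁₃ : x₁ ≠ x₃) (h₂₃ : x₂ ≠ x₃)
    (h₁ : f x₁ = 0) (h₂ : f x₂ = 0) (h₃' : f x₃ = 0) (hx : f x = 0) :
    x = x₁ ∨ x = x₂ ∨ x = x₃ := by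
  classical
  set p : R[X] := C c₃ * X ^ 3 + C c₂ * X ^ 2 + C c₁ * X + C c₀
  have hp : p ≠ 0 := ne_zero_of_natDegree_gt (n := 0) (by rw [natDegree_cubic h₃]; norm_num)
  have hroot : ∀ y, f y = 0 → y ∈ p.roots := fun y hy =>
    (mem_roots hp).2 (by simp [p, ← hf y, hy])
  by_contra! ⟨hx₁, hx₂, hx₃⟩
  have hsub : ({x, x₁, x₂, x₃} : Finset R).val ⊆ p.roots := by
    intro y hy
    simp only [Finset.insert_val, Finset.singleton_val, Multiset.mem_ndinsert,
      Multiset.mem_singleton] at hy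
    rcases hy with rfl | rfl | rfl | rfl <;> exact hroot _ ‹_›
  have hcard := card_le_degree_of_subset_roots hsub
  rw [natDegree_cubic h₃, Finset.card_insert_of_notMem (by simp [hx₁, hx₂, hx₃]),
    Finset.card_insert_of_notMem (by simp [h₁₂, h₁₃]),
    Finset.card_insert_of_notMem (by simp [h₂₃]), Finset.card_singleton] at hcard
  omega

theorem tendsto_cubic_atTop {c₃ c₂ c₁ c₀ : ℝ} (h₃ : 0 < c₃) :
    Tendsto (fun x => c₃ * x ^ 3 + c₂ * x ^ 2 + c₁ * x + c₀) atTop atTop := by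
  have := (C c₃ * X ^ 3 + C c₂ * X ^ 2 + C c₁ * X + C c₀).tendsto_atTop_of_leadingCoeff_nonneg
    (by rw [degree_cubic h₃.ne']; norm_num) (by rw [leadingCoeff_cubic h₃.ne']; exact h₃.le)
  simpa using this

section

variable {a b : ℝ}

theorem Q_eq_cubic (a b x : ℝ) :
    Q a b x = (b ^ 3 - b) * x ^ 3 + 3 * b * (1 - a) * (1 - b) * x ^ 2
      + 3 * a * (1 - a) * (1 - b) * x + (a ^ 3 - a) := by
  unfold Q; ring

theorem continuous_Q (a b : ℝ) : Continuous (Q a b) := by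
  unfold Q; fun_prop

theorem Q_zero_neg (ha : 0 < a) (ha₁ : a < 1) : Q a b 0 < 0 := by
  have : Q a b 0 = -(a * (1 - a) * (1 + a)) := by unfold Q; ring
  rw [this, neg_lt_zero]
  exact mul_pos (mul_pos ha (by linarith)) (by linarith)

theorem Q_one_pos (hab₀ : 0 < a + b) (hab : a + b < 1) : 0 < Q a b 1 := by
  have : Q a b 1 = (a + b) * (1 - (a + b)) * (2 - (a + b)) := by unfold Q; ring
  rw [this]
  exact mul_pos (mul_pos hab₀ (by linarith)) (by linarith)

theorem b_sub_b_cube_pos (hb : 0 < b) (hb₁ : b < 1) : 0 < b - b ^ 3 := by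
  have : b - b ^ 3 = b * (1 - b) * (1 + b) := by ring
  rw [this]
  exact mul_pos (mul_pos hb (by linarith)) (by linarith)

theorem exists_neg_Q_pos (a : ℝ) (hb : 0 < b) (hb₁ : b < 1) : ∃ u < 0, 0 < Q a b u := by
  have h := tendsto_cubic_atTop (c₂ := 3 * b * (1 - a) * (1 - b))
    (c₁ := -(3 * a * (1 - a) * (1 - b))) (c₀ := a ^ 3 - a) (b_sub_b_cube_pos hb hb₁)
  obtain ⟨x, hQ, hx⟩ := ((h.eventually_gt_atTop 0).and (eventually_gt_atTop 0)).exists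
  refine ⟨-x, neg_lt_zero.2 hx, ?_⟩
  rw [Q_eq_cubic]
  linear_combination hQ

theorem exists_one_lt_Q_neg (a : ℝ) (hb : 0 < b) (hb₁ : b < 1) : ∃ v > 1, Q a b v < 0 := by
  have h := tendsto_cubic_atTop (c₂ := -(3 * b * (1 - a) * (1 - b)))
    (c₁ := -(3 * a * (1 - a) * (1 - b))) (c₀ := a - a ^ 3) (b_sub_b_cube_pos hb hb₁)
  obtain ⟨x, hQ, hx⟩ := ((h.eventually_gt_atTop 0).and (eventually_gt_atTop 1)).exists
  refine ⟨x, hx, ?_⟩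
  rw [Q_eq_cubic]
  linear_combination hQ

end

/-- For `a, b > 0` with `a + b < 1`, the cubic `Q` has three
distinct real roots, and exactly one of these roots is negative. -/
theorem stmt1 (a b : ℝ) (ha : 0 < a) (hb : 0 < b) (hab : a + b < 1) :
    (∃ x₁ x₂ x₃ : ℝ, x₁ ≠ x₂ ∧ x₁ ≠ x₃ ∧ x₂ ≠ x₃ ∧
      Q a b x₁ = 0 ∧ Q a b x₂ = 0 ∧ Q a b x₃ = 0 ∧
      ∀ x : ℝ, Q a b x = 0 → x = x₁ ∨ x = x₂ ∨ x = x₃) ∧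
    (∃! x : ℝ, Q a b x = 0 ∧ x < 0) := by
  have hb₁ : b < 1 := by linarith
  have hQ₀ := Q_zero_neg (b := b) ha (by linarith)
  have hQ₁ := Q_one_pos (by linarith) hab
  have hQc {s : Set ℝ} : ContinuousOn (Q a b) s := (continuous_Q a b).continuousOn
  obtain ⟨u, hu, hQu⟩ := exists_neg_Q_pos a hb hb₁
  obtain ⟨v, hv, hQv⟩ := exists_one_lt_Q_neg a hb hb₁
  obtain ⟨x₁, ⟨-, hx₁⟩, hQx₁⟩ := intermediate_value_Ioo' hu.le hQc ⟨hQ₀, hQu⟩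
  obtain ⟨x₂, ⟨hx₂₀, hx₂₁⟩, hQx₂⟩ := intermediate_value_Ioo zero_le_one hQc ⟨hQ₀, hQ₁⟩
  obtain ⟨x₃, ⟨hx₃, -⟩, hQx₃⟩ := intermediate_value_Ioo' hv.le hQc ⟨hQv, hQ₁⟩
  have hroots : ∀ x, Q a b x = 0 → x = x₁ ∨ x = x₂ ∨ x = x₃ := fun x hx =>
    eq_or_eq_or_eq_of_cubic_eq_zero (Q_eq_cubic a b)
      (sub_neg.2 (sub_pos.1 (b_sub_b_cube_pos hb hb₁))).ne
      (by linarith) (by linarith) (by linarith) hQx₁ hQx₂ hQx₃ hx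
  refine ⟨⟨x₁, x₂, x₃, by linarith, by linarith, by linarith, hQx₁, hQx₂, hQx₃, hroots⟩,
    x₁, ⟨hQx₁, hx₁⟩, fun y ⟨hy, hy₀⟩ => ?_⟩
  rcases hroots y hy with h | h | h <;> subst h <;> linarith
end

section
/- Let α > 0, N ≥ 2, and let X(t) = (x₁(t), …, x_N(t)) be a solution on [t₀, T) of the Coulomb repulsion system dx_j/dt = Σ_{i ≠ j} α/(x_j(t) − x_i(t)) for t ∈ (t₀, T), with each x_j continuous on [t₀, T), x₁(t) ≤ ⋯ ≤ x_N(t) for all t, the coordinates pairwise distinct for t > t₀, and such that at time t₀ there is exactly one index k with x_k(t₀) = x_{k+1}(t₀) while all other initial values are pairwise distinct and distinct from x_k(t₀). Then lim_{t ↓ t₀} (x_k(t) − x_k(t₀))/√(t − t₀) = −√α and lim_{t ↓ t₀} (x_{k+1}(t) − x_{k+1}(t₀))/√(t − t₀) = +√α. -/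
/-!
Put `u = x_{k+1} - x_k`, `s = x_{k+1} + x_k`, and let `F_j` be the force exerted on `x_j` by
the other `N - 2` particles. These stay away from `x_k(t₀)`, so `F_k` and `F_{k+1}` are continuous
at `t₀`, while the system gives `u' = 2α/u + (F_{k+1} - F_k)` and `s' = F_{k+1} + F_k`.
Hence `(u²)' → 4α` and `s'` converges as `t ↓ t₀`; a function continuous at `t₀` whose derivative
converges has that limit as one-sided derivative, so `u²/(t - t₀) → 4α` and
`(s(t) - s(t₀))/(t - t₀)` converges. Thus `u/√(t - t₀) → 2√α` and `(s(t) - s(t₀))/√(t - t₀) → 0`,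
and `x_k, x_{k+1} = (s ∓ u)/2`.
-/

open Set Filter Topology Finset

theorem tendsto_slope_nhdsGT_of_tendsto_hasDerivAt {f f' : ℝ → ℝ} {a L : ℝ}
    (hf : ContinuousWithinAt f (Ioi a) a) (hderiv : ∀ᶠ t in 𝓝[>] a, HasDerivAt f (f' t) t)
    (hlim : Tendsto f' (𝓝[>] a) (𝓝 L)) :
    Tendsto (fun t => (f t - f a) / (t - a)) (𝓝[>] a) (𝓝 L) := by
  set s := {t | HasDerivAt f (f' t) t} ∩ Ioi a
  have hs : s ∈ 𝓝[>] a := inter_mem hderiv self_mem_nhdsWithin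
  have hdiff : HasDerivWithinAt f L (Ici a) a :=
    hasDerivWithinAt_Ici_of_tendsto_deriv (fun t ht => ht.1.differentiableAt.differentiableWithinAt)
      (hf.mono inter_subset_right) hs
      (hlim.congr' (hderiv.mono fun t ht => ht.deriv.symm))
  rw [← hasDerivWithinAt_Ioi_iff_Ici,
    hasDerivWithinAt_iff_tendsto_slope' Set.self_notMem_Ioi] at hdiff
  exact hdiff.congr (slope_def_field f a)

theorem tendsto_sub_div_sqrt_of_tendsto_slope {f : ℝ → ℝ} {a L : ℝ}
    (hslope : Tendsto (fun t => (f t - f a) / (t - a)) (𝓝[>] a) (𝓝 L)) :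
    Tendsto (fun t => (f t - f a) / √(t - a)) (𝓝[>] a) (𝓝 0) := by
  have hsqrt : Tendsto (fun t => √(t - a)) (𝓝[>] a) (𝓝 0) := by
    have : Continuous fun t => √(t - a) := by fun_prop
    simpa using (this.tendsto a).mono_left nhdsWithin_le_nhds
  have := hslope.mul hsqrt
  rw [mul_zero] at this
  refine this.congr fun t => ?_
  rw [div_mul_eq_mul_div, mul_div_assoc, Real.sqrt_div_self', mul_one_div]

theorem tendsto_div_sqrt_of_hasDerivAt_div_add {u R : ℝ → ℝ} {a c : ℝ}
    (hu : ContinuousWithinAt u (Ioi a) a) (hu₀ : u a = 0) (hpos : ∀ᶠ t in 𝓝[>] a, 0 < u t)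
    (hderiv : ∀ᶠ t in 𝓝[>] a, HasDerivAt u (c / u t + R t) t)
    (hR : IsBoundedUnder (· ≤ ·) (𝓝[>] a) ((‖·‖) ∘ R)) :
    Tendsto (fun t => u t / √(t - a)) (𝓝[>] a) (𝓝 √(2 * c)) := by
  have hu_lim : Tendsto u (𝓝[>] a) (𝓝 0) := hu₀ ▸ hu
  -- `(u²)' = 2c + 2uR`, and `2uR → 0` because `u → 0` while `R` stays bounded.
  have hsq : Tendsto (fun t => (u t ^ 2 - u a ^ 2) / (t - a)) (𝓝[>] a) (𝓝 (2 * c)) := by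
    refine tendsto_slope_nhdsGT_of_tendsto_hasDerivAt (f' := fun t => 2 * c + 2 * (u t * R t))
      (hu.pow 2) ?_ ?_
    · filter_upwards [hpos, hderiv] with t ht hdt
      refine (hdt.fun_pow 2).congr_deriv ?_
      field_simp
      ring
    · simpa using ((hu_lim.zero_mul_isBoundedUnder_le hR).const_mul 2).const_add (2 * c)
  refine hsq.sqrt.congr' (hpos.mono fun t ht => ?_)
  rw [hu₀, zero_pow two_ne_zero, sub_zero, Real.sqrt_div (sq_nonneg _), Real.sqrt_sq ht.le]

section CoulombForce

variable {N : ℕ} (α : ℝ) (x : Fin N → ℝ → ℝ)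

noncomputable def coulombForce (S : Finset (Fin N)) (j : Fin N) (t : ℝ) : ℝ :=
  ∑ i ∈ S, α / (x j t - x i t)

theorem coulombForce_univ_erase {j l : Fin N} (hjl : j ≠ l) (t : ℝ) :
    coulombForce α x (univ.erase j) j t =
      α / (x j t - x l t) + coulombForce α x ((univ.erase j).erase l) j t :=
  (add_sum_erase _ _ (mem_erase.2 ⟨hjl.symm, mem_univ l⟩)).symm

theorem tendsto_coulombForce {l : Filter ℝ} {S : Finset (Fin N)} {j : Fin N} {t₀ : ℝ}
    (hx : ∀ i, Tendsto (x i) l (𝓝 (x i t₀))) (hsep : ∀ i ∈ S, x j t₀ ≠ x i t₀) :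
    Tendsto (coulombForce α x S j) l (𝓝 (coulombForce α x S j t₀)) :=
  tendsto_finsetSum S fun i hi =>
    tendsto_const_nhds.div ((hx j).sub (hx i)) (sub_ne_zero.2 (hsep i hi))

variable {α x} {k l : Fin N} {t : ℝ}

theorem hasDerivAt_coulomb_sub (hkl : k ≠ l)
    (hk : HasDerivAt (x k) (coulombForce α x (univ.erase k) k t) t)
    (hl : HasDerivAt (x l) (coulombForce α x (univ.erase l) l t) t) :
    HasDerivAt (fun τ => x l τ - x k τ)
      (2 * α / (x l t - x k t) + (coulombForce α x ((univ.erase k).erase l) l t -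
        coulombForce α x ((univ.erase k).erase l) k t)) t := by
  refine (hl.fun_sub hk).congr_deriv ?_
  rw [coulombForce_univ_erase α x hkl, coulombForce_univ_erase α x hkl.symm, erase_right_comm,
    ← neg_sub (x l t), div_neg]
  ring

theorem hasDerivAt_coulomb_add (hkl : k ≠ l)
    (hk : HasDerivAt (x k) (coulombForce α x (univ.erase k) k t) t)
    (hl : HasDerivAt (x l) (coulombForce α x (univ.erase l) l t) t) :
    HasDerivAt (fun τ => x l τ + x k τ)
      (coulombForce α x ((univ.erase k).erase l) l t +
        coulombForce α x ((univ.erase k).erase l) k t) t := by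
  refine (hl.fun_add hk).congr_deriv ?_
  rw [coulombForce_univ_erase α x hkl, coulombForce_univ_erase α x hkl.symm, erase_right_comm,
    ← neg_sub (x l t), div_neg]
  ring

end CoulombForce

theorem stmt4_general (α : ℝ) (N : ℕ) (t₀ T : ℝ) (htT : t₀ < T)
    (x : Fin N → ℝ → ℝ) (k : Fin N) (hk : (k : ℕ) + 1 < N)
    (hcont : ∀ j : Fin N, ContinuousOn (x j) (Set.Ico t₀ T))
    (hord : ∀ t ∈ Set.Ico t₀ T, ∀ i j : Fin N, i ≤ j → x i t ≤ x j t)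
    (hdist : ∀ t ∈ Set.Ioo t₀ T, ∀ i j : Fin N, i ≠ j → x i t ≠ x j t)
    (hode : ∀ j : Fin N, ∀ t ∈ Set.Ioo t₀ T,
      HasDerivAt (x j) (∑ i ∈ Finset.univ.erase j, α / (x j t - x i t)) t)
    (hcoll : x k t₀ = x ⟨(k : ℕ) + 1, hk⟩ t₀)
    (hinit : ∀ i j : Fin N, i < j → ¬(i = k ∧ j = ⟨(k : ℕ) + 1, hk⟩) →
      x i t₀ < x j t₀) :
    Tendsto (fun t => (x k t - x k t₀) / Real.sqrt (t - t₀))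
        (nhdsWithin t₀ (Set.Ioi t₀)) (nhds (-Real.sqrt α)) ∧
    Tendsto (fun t => (x ⟨(k : ℕ) + 1, hk⟩ t - x ⟨(k : ℕ) + 1, hk⟩ t₀) /
          Real.sqrt (t - t₀))
        (nhdsWithin t₀ (Set.Ioi t₀)) (nhds (Real.sqrt α)) := by
  set l : Fin N := ⟨(k : ℕ) + 1, hk⟩
  have hkl : k < l := Fin.lt_def.2 (Nat.lt_succ_self _)
  have hx₀ (j : Fin N) : Tendsto (x j) (𝓝[>] t₀) (𝓝 (x j t₀)) :=
    (hcont j t₀ ⟨le_rfl, htT⟩).mono_of_mem_nhdsWithin (Ico_mem_nhdsGT htT)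
  have hsep : ∀ i ∈ (univ.erase k).erase l, x k t₀ ≠ x i t₀ := by
    intro i hi
    obtain ⟨hil, hik, -⟩ := by simpa only [mem_erase] using hi
    rcases lt_or_gt_of_ne hik with h | h
    · exact (hinit i k h fun h' => hik h'.1).ne'
    · exact (hinit k i h fun h' => hil h'.2).ne
  have hFk := tendsto_coulombForce α x hx₀ hsep
  have hFl := tendsto_coulombForce α x hx₀ (hcoll ▸ hsep)
  have hIoo : ∀ᶠ t in 𝓝[>] t₀, t ∈ Ioo t₀ T := Ioo_mem_nhdsGT htT
  have hgap := tendsto_div_sqrt_of_hasDerivAt_div_add ((hx₀ l).sub (hx₀ k))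
    (sub_eq_zero.2 hcoll.symm)
    (hIoo.mono fun t ht => sub_pos.2 ((hord t (Ioo_subset_Ico_self ht) k l hkl.le).lt_of_ne
      (hdist t ht k l hkl.ne)))
    (hIoo.mono fun t ht => hasDerivAt_coulomb_sub hkl.ne (hode k t ht) (hode l t ht))
    (hFl.sub hFk).norm.isBoundedUnder_le
  have hmid := tendsto_sub_div_sqrt_of_tendsto_slope
    (tendsto_slope_nhdsGT_of_tendsto_hasDerivAt ((hx₀ l).add (hx₀ k))
      (hIoo.mono fun t ht => hasDerivAt_coulomb_add hkl.ne (hode k t ht) (hode l t ht))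
      (hFl.add hFk))
  have hsqrt : √(2 * (2 * α)) = 2 * √α := by
    rw [← mul_assoc, Real.sqrt_mul (by norm_num), show (2 : ℝ) * 2 = 2 ^ 2 by norm_num,
      Real.sqrt_sq zero_le_two]
  rw [hsqrt] at hgap
  constructor
  · convert (hmid.sub hgap).div_const 2 using 2 with t
    · rw [hcoll]; ring
    · ring
  · convert (hmid.add hgap).div_const 2 using 2 with t
    · rw [hcoll]; ring
    · ring

/-- Let `X(t) = (x₁(t), …, x_N(t))` solve the Coulomb
repulsion system `dx_j/dt = Σ_{i ≠ j} α/(x_j - x_i)` on `(t₀, T)`, with the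
coordinates continuous on `[t₀, T)`, ordered, pairwise distinct for `t > t₀`,
and such that at `t₀` exactly the two consecutive coordinates `x_k, x_{k+1}`
coincide while all other initial values are pairwise distinct and distinct
from `x_k(t₀)`. Then `(x_k(t) - x_k(t₀))/√(t - t₀) → -√α` and
`(x_{k+1}(t) - x_{k+1}(t₀))/√(t - t₀) → +√α` as `t ↓ t₀`. -/
theorem stmt4 (α : ℝ) (hα : 0 < α) (N : ℕ) (hN : 2 ≤ N) (t₀ T : ℝ) (htT : t₀ < T)
    (x : Fin N → ℝ → ℝ) (k : Fin N) (hk : (k : ℕ) + 1 < N)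
    (hcont : ∀ j : Fin N, ContinuousOn (x j) (Set.Ico t₀ T))
    (hord : ∀ t ∈ Set.Ico t₀ T, ∀ i j : Fin N, i ≤ j → x i t ≤ x j t)
    (hdist : ∀ t ∈ Set.Ioo t₀ T, ∀ i j : Fin N, i ≠ j → x i t ≠ x j t)
    (hode : ∀ j : Fin N, ∀ t ∈ Set.Ioo t₀ T,
      HasDerivAt (x j) (∑ i ∈ Finset.univ.erase j, α / (x j t - x i t)) t)
    (hcoll : x k t₀ = x ⟨(k : ℕ) + 1, hk⟩ t₀)
    (hinit : ∀ i j : Fin N, i < j → ¬(i = k ∧ j = ⟨(k : ℕ) + 1, hk⟩) →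
      x i t₀ < x j t₀) :
    Tendsto (fun t => (x k t - x k t₀) / Real.sqrt (t - t₀))
        (nhdsWithin t₀ (Set.Ioi t₀)) (nhds (-Real.sqrt α)) ∧
    Tendsto (fun t => (x ⟨(k : ℕ) + 1, hk⟩ t - x ⟨(k : ℕ) + 1, hk⟩ t₀) /
          Real.sqrt (t - t₀))
        (nhdsWithin t₀ (Set.Ioi t₀)) (nhds (Real.sqrt α)) :=
  stmt4_general α N t₀ T htT x k hk hcont hord hdist hode hcoll hinit
end

section
/- (Local growth property.) Let U₁, …, U_n : [0,T] → ℝ be continuous, let g_t be the multislit Loewner flow with these drivers, K_t the associated hulls, and for t ∈ [0,T] set C_t = max( sup{ |U_j(s) − U_j(0)| : 0 ≤ s ≤ t, 1 ≤ j ≤ n }, √(nt) ). Then for every z ∈ K_t there is at least one index j ∈ {1, …, n} with |z − U_j(0)| ≤ 3·C_t. Equivalently, if z ∈ ℍ satisfies |z − U_j(0)| > 3·C_t for every j, then the solution s ↦ g_s(z) exists on [0,t] with g_s(z) ∈ ℍ, and moreover |g_s(z) − z| ≤ C_t for all 0 ≤ s ≤ t. -/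
open Set

/-- A point `z` of the upper half-plane survives the multislit Loewner flow
with drivers `U` up to time `t` if the Loewner initial value problem has a
solution on `[0,t]` staying in the upper half-plane. -/
def Survives {n : ℕ} (U : Fin n → ℝ → ℝ) (z : ℂ) (t : ℝ) : Prop :=
  ∃ g : ℝ → ℂ, g 0 = z ∧ ∀ s ∈ Set.Icc (0 : ℝ) t, 0 < (g s).im ∧
    HasDerivWithinAt g (∑ j : Fin n, 1 / (g s - (U j s : ℂ))) (Set.Icc (0 : ℝ) t) s

/-- The hull at time `t` of the multislit Loewner flow: the set of points of
the upper half-plane whose escape time is at most `t`. -/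
def Hull {n : ℕ} (U : Fin n → ℝ → ℝ) (t : ℝ) : Set ℂ :=
  {z | 0 < z.im ∧ ¬ Survives U z t}

/-- `C_t = max( sup{ |U_j(s) - U_j(0)| : 0 ≤ s ≤ t, 1 ≤ j ≤ n }, √(nt) )`. -/
noncomputable def Cbound {n : ℕ} (U : Fin n → ℝ → ℝ) (t : ℝ) : ℝ :=
  max (sSup {v : ℝ | ∃ (j : Fin n) (s : ℝ), s ∈ Set.Icc (0 : ℝ) t ∧ v = |U j s - U j 0|})
      (Real.sqrt (n * t))

/-! On the ball of radius `C_t` around `z` every point stays at distance `≥ C_t` from all drivers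
up to time `t`, because `|z - U_j(0)| ≥ 3 C_t` and the drivers move by at most `C_t`. There the
Loewner vector field is bounded by `n / C_t` and `n / C_t²`-Lipschitz, and `n t ≤ C_t²`, so
Picard–Lindelöf produces a solution on `[0,t]` that never leaves the ball. Its imaginary part
`y` satisfies `|y'| ≤ (n / C_t²) |y|`, so by Grönwall's inequality run backwards from a zero it
cannot vanish. -/

open Metric

theorem eq_zero_of_abs_deriv_le_mul_abs_self_of_eq_zero_left {E : Type*} [NormedAddCommGroup E]
    [NormedSpace ℝ E] {f f' : ℝ → E} {K a b : ℝ} (hf : ContinuousOn f (Icc a b))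
    (hf' : ∀ x ∈ Ioc a b, HasDerivWithinAt f (f' x) (Iic x) x) (hb : f b = 0)
    (bound : ∀ x ∈ Ioc a b, ‖f' x‖ ≤ K * ‖f x‖) :
    ∀ x ∈ Icc a b, f x = 0 := by
  have hneg : ∀ x ∈ Icc (-b) (-a), f (-x) = 0 := by
    refine eq_zero_of_abs_deriv_le_mul_abs_self_of_eq_zero_right (f' := fun x => -f' (-x))
      (hf.comp continuousOn_neg fun x hx => ⟨le_neg.1 hx.2, neg_le.1 hx.1⟩) (fun x hx => ?_)
      (by simpa using hb) fun x hx => by simpa using bound (-x) ⟨lt_neg.1 hx.2, neg_le.1 hx.1⟩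
    simpa [Function.comp_def] using (hf' (-x) ⟨lt_neg.1 hx.2, neg_le.1 hx.1⟩).scomp x
      (hasDerivAt_neg x).hasDerivWithinAt fun y hy => neg_le_neg (mem_Ici.1 hy)
  intro x hx
  simpa using hneg (-x) ⟨neg_le_neg hx.2, neg_le_neg hx.1⟩

theorem pos_of_abs_deriv_le_mul_abs_self {y y' : ℝ → ℝ} {K a b : ℝ}
    (hy : ∀ x ∈ Icc a b, HasDerivWithinAt y (y' x) (Icc a b) x) (ha : 0 < y a)
    (bound : ∀ x ∈ Icc a b, |y' x| ≤ K * |y x|) :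
    ∀ x ∈ Icc a b, 0 < y x := by
  intro x hx
  by_contra! hyx
  have hcont : ContinuousOn y (Icc a b) := fun x hx => (hy x hx).continuousWithinAt
  obtain ⟨c, hc, hyc⟩ : ∃ c ∈ Icc a x, y c = 0 :=
    intermediate_value_Icc' hx.1 (hcont.mono (Icc_subset_Icc_right hx.2)) ⟨hyx, ha.le⟩
  have hsub : Icc a c ⊆ Icc a b := Icc_subset_Icc_right (hc.2.trans hx.2)
  have hya := eq_zero_of_abs_deriv_le_mul_abs_self_of_eq_zero_left (hcont.mono hsub)
    (fun x hx' => (hy x (hsub (Ioc_subset_Icc_self hx'))).mono_of_mem_nhdsWithin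
      (Icc_mem_nhdsLE_of_mem ⟨hx'.1, hx'.2.trans (hc.2.trans hx.2)⟩))
    hyc (fun x hx' => bound x (hsub (Ioc_subset_Icc_self hx'))) a (left_mem_Icc.2 hc.1)
  exact ha.ne' hya

theorem IsPicardLindelof.exists_eq_forall_mem_Icc_hasDerivWithinAt_mem_closedBall
    {E : Type*} [NormedAddCommGroup E] [NormedSpace ℝ E] [CompleteSpace E] {f : ℝ → E → E}
    {tmin tmax : ℝ} {t₀ : Icc tmin tmax} {x₀ : E} {a L K : NNReal}
    (hf : IsPicardLindelof f t₀ x₀ a 0 L K) :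
    ∃ α : ℝ → E, α t₀ = x₀ ∧ ∀ t ∈ Icc tmin tmax,
      α t ∈ closedBall x₀ a ∧ HasDerivWithinAt α (f t (α t)) (Icc tmin tmax) t := by
  obtain ⟨α, hα⟩ := ODE.FunSpace.exists_isFixedPt_next hf (mem_closedBall_self le_rfl)
  refine ⟨α.compProj, by rw [ODE.FunSpace.compProj_val, ← hα, ODE.FunSpace.next_apply₀],
    fun t ht => ⟨α.compProj_mem_closedBall hf.mul_max_le, ?_⟩⟩
  apply ODE.hasDerivWithinAt_picard_Icc t₀.2 hf.continuousOn_uncurry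
    α.continuous_compProj.continuousOn (fun _ _ => α.compProj_mem_closedBall hf.mul_max_le)
    x₀ ht |>.congr_of_mem _ ht
  intro t' ht'
  nth_rw 1 [← hα]
  rw [ODE.FunSpace.compProj_of_mem ht', ODE.FunSpace.next_apply]

theorem dist_inv_inv_le_of_le_norm {𝕜 : Type*} [NormedDivisionRing 𝕜] {x y : 𝕜} {C : ℝ}
    (hC : 0 < C) (hx : C ≤ ‖x‖) (hy : C ≤ ‖y‖) :
    dist x⁻¹ y⁻¹ ≤ dist x y / C ^ 2 := by
  rw [dist_inv_inv₀ (norm_pos_iff.1 (hC.trans_le hx)) (norm_pos_iff.1 (hC.trans_le hy)), sq]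
  gcongr

theorem Complex.abs_im_inv_le_of_le_norm {w : ℂ} {C : ℝ} (hC : 0 < C) (hw : C ≤ ‖w‖) :
    |w⁻¹.im| ≤ |w.im| / C ^ 2 := by
  rw [Complex.inv_im, abs_div, abs_neg, Complex.normSq_eq_norm_sq, abs_of_nonneg (sq_nonneg ‖w‖)]
  gcongr

noncomputable def loewnerField {n : ℕ} (U : Fin n → ℝ → ℝ) (s : ℝ) (w : ℂ) : ℂ :=
  ∑ j, 1 / (w - (U j s : ℂ))

section loewnerField

variable {n : ℕ} {U : Fin n → ℝ → ℝ} {s t C : ℝ} {w x y z : ℂ}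

theorem norm_loewnerField_le (hC : 0 < C) (hw : ∀ j, C ≤ ‖w - U j s‖) :
    ‖loewnerField U s w‖ ≤ n / C :=
  calc ‖loewnerField U s w‖ ≤ ∑ _j : Fin n, C⁻¹ := norm_sum_le_of_le _ fun j _ => by
        rw [one_div, norm_inv]; exact inv_anti₀ hC (hw j)
    _ = n / C := by simp [div_eq_mul_inv]

theorem dist_loewnerField_le (hC : 0 < C) (hx : ∀ j, C ≤ ‖x - U j s‖)
    (hy : ∀ j, C ≤ ‖y - U j s‖) :
    dist (loewnerField U s x) (loewnerField U s y) ≤ n / C ^ 2 * dist x y :=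
  calc dist (loewnerField U s x) (loewnerField U s y) ≤ ∑ _j : Fin n, dist x y / C ^ 2 :=
        dist_sum_sum_le_of_le _ fun j _ => by
          simpa only [one_div, dist_sub_right] using dist_inv_inv_le_of_le_norm hC (hx j) (hy j)
    _ = n / C ^ 2 * dist x y := by simp only [Finset.sum_const, Finset.card_univ,
          Fintype.card_fin, nsmul_eq_mul]; ring

theorem abs_im_loewnerField_le (hC : 0 < C) (hw : ∀ j, C ≤ ‖w - U j s‖) :
    |(loewnerField U s w).im| ≤ n / C ^ 2 * |w.im| :=
  calc |(loewnerField U s w).im| ≤ ∑ _j : Fin n, |w.im| / C ^ 2 := by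
        rw [loewnerField, Complex.im_sum]
        refine (Finset.abs_sum_le_sum_abs _ _).trans (Finset.sum_le_sum fun j _ => ?_)
        simpa [one_div] using Complex.abs_im_inv_le_of_le_norm hC (hw j)
    _ = n / C ^ 2 * |w.im| := by simp only [Finset.sum_const, Finset.card_univ,
          Fintype.card_fin, nsmul_eq_mul]; ring

theorem isPicardLindelof_loewnerField (hC : 0 < C) (ht : 0 ≤ t) (hCt : n * t ≤ C ^ 2)
    (hU : ∀ j, ContinuousOn (U j) (Icc 0 t))
    (hfar : ∀ s ∈ Icc 0 t, ∀ w ∈ closedBall z C, ∀ j, C ≤ ‖w - U j s‖) :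
    IsPicardLindelof (loewnerField U) (tmin := 0) (tmax := t) ⟨0, left_mem_Icc.2 ht⟩ z
      ⟨C, hC.le⟩ 0 ⟨n / C, by positivity⟩ (n / C ^ 2).toNNReal where
  lipschitzOnWith s hs := LipschitzOnWith.of_dist_le_mul fun x hx y hy => by
    rw [Real.coe_toNNReal _ (by positivity)]
    exact dist_loewnerField_le hC (hfar s hs x hx) (hfar s hs y hy)
  continuousOn w hw := continuousOn_finsetSum _ fun j _ =>
    continuousOn_const.div (continuousOn_const.sub (Complex.continuous_ofReal.comp_continuousOn
      (hU j))) fun s hs => by simpa using (hC.trans_le (hfar s hs w hw j)).ne'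
  norm_le s hs w hw := norm_loewnerField_le hC (hfar s hs w hw)
  mul_max_le := by
    have : n / C * t ≤ C := by
      rw [div_mul_eq_mul_div, div_le_iff₀ hC]; nlinarith
    change n / C * max (t - 0) (0 - 0) ≤ C - 0
    simpa [ht] using this

theorem exists_loewnerField_solution_of_far (hC : 0 < C) (ht : 0 ≤ t) (hCt : n * t ≤ C ^ 2)
    (hU : ∀ j, ContinuousOn (U j) (Icc 0 t)) (hdrift : ∀ j, ∀ s ∈ Icc 0 t, |U j s - U j 0| ≤ C)
    (hz : 0 < z.im) (hfar : ∀ j, 3 * C ≤ ‖z - U j 0‖) :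
    ∃ g : ℝ → ℂ, g 0 = z ∧ ∀ s ∈ Icc 0 t,
      0 < (g s).im ∧ HasDerivWithinAt g (loewnerField U s (g s)) (Icc 0 t) s ∧ ‖g s - z‖ ≤ C := by
  have hball : ∀ s ∈ Icc 0 t, ∀ w ∈ closedBall z C, ∀ j, C ≤ ‖w - U j s‖ := by
    intro s hs w hw j
    have hdrift' : dist (U j s : ℂ) (U j 0) ≤ C := by
      rw [Complex.dist_eq, ← Complex.ofReal_sub, Complex.norm_real]; exact hdrift j s hs
    have hzj := hfar j
    rw [← Complex.dist_eq] at hzj ⊢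
    linarith [dist_triangle4 z w (U j s) (U j 0), dist_comm z w, mem_closedBall.1 hw]
  obtain ⟨g, hg0, hg⟩ := (isPicardLindelof_loewnerField hC ht hCt hU hball
    ).exists_eq_forall_mem_Icc_hasDerivWithinAt_mem_closedBall
  have him : ∀ s ∈ Icc 0 t, 0 < (g s).im :=
    pos_of_abs_deriv_le_mul_abs_self
      (fun s hs => Complex.imCLM.hasFDerivAt.comp_hasDerivWithinAt s (hg s hs).2)
      (by simpa [hg0] using hz) fun s hs => abs_im_loewnerField_le hC (hball s hs _ (hg s hs).1)
  exact ⟨g, hg0, fun s hs => ⟨him s hs, (hg s hs).2, mem_closedBall_iff_norm.1 (hg s hs).1⟩⟩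

theorem hasDerivWithinAt_const_loewnerField (h : (n : ℝ) * t = 0) (z : ℂ) :
    HasDerivWithinAt (fun _ => z) (loewnerField U s z) (Icc 0 t) s := by
  rcases mul_eq_zero.1 h with hn | rfl
  · obtain rfl : n = 0 := by exact_mod_cast hn
    simpa [loewnerField] using hasDerivWithinAt_const s _ z
  · exact HasFDerivWithinAt.of_subsingleton (subsingleton_Icc_of_ge le_rfl)

theorem abs_sub_le_Cbound (hU : ∀ j, ContinuousOn (U j) (Icc 0 t)) (j : Fin n)
    (hs : s ∈ Icc 0 t) : |U j s - U j 0| ≤ Cbound U t := by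
  have hbdd : BddAbove {v : ℝ | ∃ (j : Fin n) (s : ℝ), s ∈ Icc 0 t ∧ v = |U j s - U j 0|} := by
    have hset : {v : ℝ | ∃ (j : Fin n) (s : ℝ), s ∈ Icc 0 t ∧ v = |U j s - U j 0|}
        = ⋃ j, (fun s => |U j s - U j 0|) '' Icc 0 t := by
      ext v; simp [eq_comm]
    rw [hset]
    exact (isCompact_iUnion fun j => isCompact_Icc.image_of_continuousOn
      ((hU j).sub continuousOn_const).abs).bddAbove
  exact (le_csSup hbdd ⟨j, s, hs, rfl⟩).trans (le_max_left _ _)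

end loewnerField

theorem stmt6_general (n : ℕ) (T : ℝ) (U : Fin n → ℝ → ℝ)
    (hU : ∀ j, ContinuousOn (U j) (Set.Icc 0 T)) (t : ℝ) (ht : t ∈ Set.Icc 0 T) :
    (∀ z ∈ Hull U t, ∃ j : Fin n, ‖z - (U j 0 : ℂ)‖ ≤ 3 * Cbound U t) ∧
    (∀ z : ℂ, 0 < z.im →
      (∀ j : Fin n, 3 * Cbound U t < ‖z - (U j 0 : ℂ)‖) →
      ∃ g : ℝ → ℂ, g 0 = z ∧ ∀ s ∈ Set.Icc (0 : ℝ) t,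
        0 < (g s).im ∧
        HasDerivWithinAt g (∑ j : Fin n, 1 / (g s - (U j s : ℂ))) (Set.Icc (0 : ℝ) t) s ∧
        ‖g s - z‖ ≤ Cbound U t) := by
  have hUt : ∀ j, ContinuousOn (U j) (Icc 0 t) := fun j => (hU j).mono (Icc_subset_Icc_right ht.2)
  obtain ⟨hC0, hCt⟩ := Real.sqrt_le_iff.1 (le_max_right _ _ : √(n * t) ≤ Cbound U t)
  have survives : ∀ z : ℂ, 0 < z.im → (∀ j, 3 * Cbound U t < ‖z - U j 0‖) →
      ∃ g : ℝ → ℂ, g 0 = z ∧ ∀ s ∈ Icc 0 t, 0 < (g s).im ∧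
        HasDerivWithinAt g (loewnerField U s (g s)) (Icc 0 t) s ∧ ‖g s - z‖ ≤ Cbound U t := by
    intro z hz hfar
    rcases hC0.eq_or_lt with hC | hC
    · have hnt : (n : ℝ) * t = 0 := by nlinarith [mul_nonneg n.cast_nonneg ht.1]
      exact ⟨fun _ => z, rfl, fun s _ => ⟨hz, hasDerivWithinAt_const_loewnerField hnt z,
        by rwa [sub_self, norm_zero]⟩⟩
    · exact exists_loewnerField_solution_of_far hC ht.1 hCt hUt (fun j s hs => abs_sub_le_Cbound hUt j hs) hz
        fun j => (hfar j).le
  refine ⟨fun z hz => ?_, survives⟩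
  by_contra! hfar
  obtain ⟨g, hg0, hg⟩ := survives z hz.1 hfar
  exact hz.2 ⟨g, hg0, fun s hs => ⟨(hg s hs).1, (hg s hs).2.1⟩⟩

/-- local growth property. Every point of the hull `K_t` is
within distance `3·C_t` of one of the initial driving points `U_j(0)`;
equivalently, if `|z - U_j(0)| > 3·C_t` for every `j`, then the Loewner
solution from `z` exists on `[0,t]`, stays in the upper half-plane, and
satisfies `|g_s(z) - z| ≤ C_t` for all `0 ≤ s ≤ t`. -/
theorem stmt6 (n : ℕ) (hn : 0 < n) (T : ℝ) (U : Fin n → ℝ → ℝ)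
    (hU : ∀ j, ContinuousOn (U j) (Set.Icc 0 T)) (t : ℝ) (ht : t ∈ Set.Icc 0 T) :
    (∀ z ∈ Hull U t, ∃ j : Fin n, ‖z - (U j 0 : ℂ)‖ ≤ 3 * Cbound U t) ∧
    (∀ z : ℂ, 0 < z.im →
      (∀ j : Fin n, 3 * Cbound U t < ‖z - (U j 0 : ℂ)‖) →
      ∃ g : ℝ → ℂ, g 0 = z ∧ ∀ s ∈ Set.Icc (0 : ℝ) t,
        0 < (g s).im ∧
        HasDerivWithinAt g (∑ j : Fin n, 1 / (g s - (U j s : ℂ))) (Set.Icc (0 : ℝ) t) s ∧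
        ‖g s - z‖ ≤ Cbound U t) :=
  stmt6_general n T U hU t ht
end

section
/- (Grönwall stability of the reverse Loewner flow.) Fix t ∈ [0,1], n ≥ 2, an index k, and ŷ > 0. Let V₁, V₂ : [0,t] → ℝ and U₁, …, U_n : [0,t] → ℝ be continuous, and for z ∈ ℍ let h_s(z) and h_s^U(z) solve the reverse Loewner equations dh_s/ds = −1/(h_s − V₁(t−s)) − 1/(h_s − V₂(t−s)) and dh_s^U/ds = −Σ_{j=1}^n 1/(h_s^U − U_j(t−s)) on [0,t] with h₀(z) = h₀^U(z) = z. Let M = max_{s∈[0,t], j∈{1,2}} |V_j(s) − U_{k+j−1}(s)|, and suppose φ̄ ≥ 0 is such that Σ_{j ≠ k, k+1} 1/|h_s^U(z) − U_j(t−s)| ≤ φ̄ for all s ∈ [0,t]. Then for every z with Im z ≥ ŷ, |h_t(z) − h_t^U(z)| ≤ (2M/ŷ² + φ̄)·exp(2/ŷ²). -/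
/-!
Along either flow the imaginary part is nondecreasing while it is positive, so both trajectories
stay in `{Im ≥ ŷ}`. There `w ↦ 1 / (w - u)` is `1/ŷ²`-Lipschitz in `w` and in the pole `u`, so
the two matched pole pairs contribute at most `(2/ŷ²)‖h - hᵁ‖ + 2M/ŷ²` to the difference of
the vector fields and the unmatched poles at most `φ̄`. Grönwall's inequality with zero initial
difference gives `‖h_t - hᵁ_t‖ ≤ ε t e^{Kt}` with `K = 2/ŷ²`, `ε = 2M/ŷ² + φ̄`,
which is at most `ε e^K` since `t ≤ 1`.
-/

open Set

lemma le_of_hasDerivWithinAt_nonneg_of_pos {g d : ℝ → ℝ} {a b y : ℝ} (hy : 0 < y)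
    (hd : ∀ s ∈ Icc a b, HasDerivWithinAt g (d s) (Icc a b) s)
    (hd_nonneg : ∀ s ∈ Icc a b, 0 < g s → 0 ≤ d s) (ha : y ≤ g a) :
    ∀ s ∈ Icc a b, y ≤ g s := by
  have hg : ContinuousOn g (Icc a b) := fun s hs => (hd s hs).continuousWithinAt
  have le_of_pos : ∀ c ∈ Icc a b, (∀ s ∈ Ioo a c, 0 < g s) → y ≤ g c := by
    intro c hc hpos
    have hsub : Icc a c ⊆ Icc a b := Icc_subset_Icc_right hc.2
    have hmono : MonotoneOn g (Icc a c) := by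
      refine monotoneOn_of_hasDerivWithinAt_nonneg (f' := d) (convex_Icc a c) (hg.mono hsub)
        ?_ ?_ <;> rw [interior_Icc]
      · exact fun s hs => (hd s (hsub (Ioo_subset_Icc_self hs))).mono
          (Ioo_subset_Icc_self.trans hsub)
      · exact fun s hs => hd_nonneg s (hsub (Ioo_subset_Icc_self hs)) (hpos s hs)
    exact ha.trans (hmono (left_mem_Icc.2 hc.1) (right_mem_Icc.2 hc.1) hc.1)
  have hpos : ∀ s ∈ Icc a b, 0 < g s := by
    by_contra! hneg
    -- at the first zero `c` of `g`, monotonicity on `[a, c]` would give `y ≤ g c`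
    have hZ : IsCompact (Icc a b ∩ g ⁻¹' Iic 0) :=
      isCompact_Icc.of_isClosed_subset
        (hg.preimage_isClosed_of_isClosed isClosed_Icc isClosed_Iic) inter_subset_left
    obtain ⟨c, ⟨hc, hgc⟩, hmin⟩ := hZ.exists_isLeast hneg
    refine (hy.trans_le (le_of_pos c hc fun s hs => ?_)).not_ge hgc
    by_contra! hgs
    exact (hmin ⟨⟨hs.1.le, hs.2.le.trans hc.2⟩, hgs⟩).not_gt hs.2
  exact fun s hs => le_of_pos s hs fun u hu => hpos u ⟨hu.1.le, hu.2.le.trans hs.2⟩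

lemma le_im_of_hasDerivWithinAt {F v : ℝ → ℂ} {a b y : ℝ} (hy : 0 < y)
    (hF : ∀ s ∈ Icc a b, HasDerivWithinAt F (v s) (Icc a b) s)
    (hv : ∀ s ∈ Icc a b, 0 < (F s).im → 0 ≤ (v s).im) (ha : y ≤ (F a).im) :
    ∀ s ∈ Icc a b, y ≤ (F s).im :=
  le_of_hasDerivWithinAt_nonneg_of_pos hy
    (fun s hs => Complex.imCLM.hasFDerivAt.comp_hasDerivWithinAt s (hF s hs)) hv ha

lemma Complex.im_neg_one_div_sub_ofReal_nonneg {w : ℂ} (hw : 0 ≤ w.im) (u : ℝ) :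
    0 ≤ (-(1 / (w - u))).im := by
  simp only [Complex.neg_im, one_div, Complex.inv_im, Complex.sub_im, Complex.ofReal_im, sub_zero,
    neg_div, neg_neg]
  exact div_nonneg hw (Complex.normSq_nonneg _)

lemma Complex.im_neg_sum_one_div_sub_ofReal_nonneg {ι : Type*} (S : Finset ι) {w : ℂ}
    (hw : 0 ≤ w.im) (u : ι → ℝ) : 0 ≤ (-∑ j ∈ S, 1 / (w - u j)).im := by
  rw [← Finset.sum_neg_distrib, Complex.im_sum]
  exact Finset.sum_nonneg fun j _ => im_neg_one_div_sub_ofReal_nonneg hw (u j)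

lemma Complex.norm_one_div_sub_one_div_le {a b : ℂ} {y : ℝ} (hy : 0 < y) (ha : y ≤ a.im)
    (hb : y ≤ b.im) : ‖1 / b - 1 / a‖ ≤ ‖a - b‖ / y ^ 2 := by
  have hna : y ≤ ‖a‖ := ha.trans (Complex.im_le_norm a)
  have hnb : y ≤ ‖b‖ := hb.trans (Complex.im_le_norm b)
  have hb0 : b ≠ 0 := norm_pos_iff.1 (hy.trans_le hnb)
  have ha0 : a ≠ 0 := norm_pos_iff.1 (hy.trans_le hna)
  rw [one_div, one_div, ← dist_eq_norm, dist_inv_inv₀ hb0 ha0, dist_eq_norm, norm_sub_rev, sq]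
  gcongr

lemma Complex.norm_one_div_sub_ofReal_sub_le {w w' : ℂ} {y : ℝ} (hy : 0 < y) (hw : y ≤ w.im)
    (hw' : y ≤ w'.im) (v u : ℝ) :
    ‖1 / (w' - u) - 1 / (w - v)‖ ≤ (‖w - w'‖ + |v - u|) / y ^ 2 := by
  have hsub : ∀ {x : ℂ} (r : ℝ), y ≤ x.im → y ≤ (x - r).im := by simp
  refine (norm_one_div_sub_one_div_le hy (hsub v hw) (hsub u hw')).trans ?_
  gcongr
  calc ‖w - v - (w' - u)‖ = ‖(w - w') - ((v - u : ℝ) : ℂ)‖ := by push_cast; ring_nf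
    _ ≤ ‖w - w'‖ + ‖((v - u : ℝ) : ℂ)‖ := norm_sub_le _ _
    _ = ‖w - w'‖ + |v - u| := by rw [Complex.norm_real, Real.norm_eq_abs]

lemma norm_sub_sum_one_div_sub_ofReal_le {ι : Type*} [Fintype ι] [DecidableEq ι] {k k' : ι}
    (hkk' : k' ≠ k) {w w' : ℂ} {y M φ : ℝ} (hy : 0 < y) (hw : y ≤ w.im) (hw' : y ≤ w'.im)
    {v₁ v₂ : ℝ} {u : ι → ℝ} (h₁ : |v₁ - u k| ≤ M) (h₂ : |v₂ - u k'| ≤ M)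
    (hφ : ∑ j ∈ (Finset.univ.erase k).erase k', 1 / ‖w' - u j‖ ≤ φ) :
    ‖(-(1 / (w - v₁)) - 1 / (w - v₂)) - -∑ j, 1 / (w' - u j)‖
      ≤ 2 / y ^ 2 * ‖w - w'‖ + (2 * M / y ^ 2 + φ) := by
  have hsplit : ∑ j, 1 / (w' - u j) = 1 / (w' - u k) + 1 / (w' - u k')
      + ∑ j ∈ (Finset.univ.erase k).erase k', 1 / (w' - u j) := by
    rw [← Finset.add_sum_erase _ _ (Finset.mem_univ k),
      ← Finset.add_sum_erase _ _ (Finset.mem_erase.2 ⟨hkk', Finset.mem_univ k'⟩), add_assoc]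
  have hpole₁ := Complex.norm_one_div_sub_ofReal_sub_le hy hw hw' v₁ (u k)
  have hpole₂ := Complex.norm_one_div_sub_ofReal_sub_le hy hw hw' v₂ (u k')
  have hrest : ‖∑ j ∈ (Finset.univ.erase k).erase k', 1 / (w' - u j)‖ ≤ φ :=
    (norm_sum_le _ _).trans (by simpa only [norm_div, norm_one] using hφ)
  rw [hsplit]
  calc _ = ‖(1 / (w' - u k) - 1 / (w - v₁)) + (1 / (w' - u k') - 1 / (w - v₂))
        + ∑ j ∈ (Finset.univ.erase k).erase k', 1 / (w' - u j)‖ := by congr 1; ring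
    _ ≤ (‖w - w'‖ + |v₁ - u k|) / y ^ 2 + (‖w - w'‖ + |v₂ - u k'|) / y ^ 2 + φ := by
      grw [norm_add_le, norm_add_le, hpole₁, hpole₂, hrest]
    _ ≤ (‖w - w'‖ + M) / y ^ 2 + (‖w - w'‖ + M) / y ^ 2 + φ := by gcongr
    _ = 2 / y ^ 2 * ‖w - w'‖ + (2 * M / y ^ 2 + φ) := by ring

lemma norm_sub_le_gronwallBound_of_hasDerivWithinAt {E : Type*} [NormedAddCommGroup E]
    [NormedSpace ℝ E] {F G v w : ℝ → E} {a b K ε : ℝ}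
    (hF : ∀ s ∈ Icc a b, HasDerivWithinAt F (v s) (Icc a b) s)
    (hG : ∀ s ∈ Icc a b, HasDerivWithinAt G (w s) (Icc a b) s)
    (hvw : ∀ s ∈ Ico a b, ‖v s - w s‖ ≤ K * ‖F s - G s‖ + ε) :
    ∀ s ∈ Icc a b, ‖F s - G s‖ ≤ gronwallBound ‖F a - G a‖ K ε (s - a) := by
  have hFG : ∀ s ∈ Icc a b, HasDerivWithinAt (fun s => F s - G s) (v s - w s) (Icc a b) s :=
    fun s hs => (hF s hs).sub (hG s hs)
  refine norm_le_gronwallBound_of_norm_deriv_right_le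
    (fun s hs => (hFG s hs).continuousWithinAt) (fun s hs => ?_) le_rfl hvw
  exact (hFG s (Ico_subset_Icc_self hs)).mono_of_mem_nhdsWithin (Icc_mem_nhdsGE_of_mem hs)

lemma gronwallBound_zero_le {K ε x : ℝ} (hK : 0 < K) (hε : 0 ≤ ε) :
    gronwallBound 0 K ε x ≤ ε * x * Real.exp (K * x) := by
  have hexp : Real.exp (K * x) - 1 ≤ K * x * Real.exp (K * x) := by
    have h := Real.add_one_le_exp (-(K * x))
    rw [Real.exp_neg] at h
    have hpos := Real.exp_pos (K * x)
    field_simp at h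
    linarith
  simp only [gronwallBound_of_K_ne_0 hK.ne', zero_mul, zero_add]
  calc ε / K * (Real.exp (K * x) - 1) ≤ ε / K * (K * x * Real.exp (K * x)) := by gcongr
    _ = ε * x * Real.exp (K * x) := by field_simp

theorem stmt10_general (t : ℝ) (ht0 : 0 ≤ t) (ht1 : t ≤ 1)
    (n : ℕ) (k : Fin n) (hk : (k : ℕ) + 1 < n)
    (yhat : ℝ) (hy : 0 < yhat)
    (V₁ V₂ : ℝ → ℝ) (U : Fin n → ℝ → ℝ)
    (z : ℂ) (hz : yhat ≤ z.im)
    (h hU' : ℝ → ℂ) (hh0 : h 0 = z) (hhU0 : hU' 0 = z)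
    (hsol : ∀ s ∈ Set.Icc (0 : ℝ) t,
      HasDerivWithinAt h
        (-(1 / (h s - (V₁ (t - s) : ℂ))) - 1 / (h s - (V₂ (t - s) : ℂ)))
        (Set.Icc (0 : ℝ) t) s)
    (hUsol : ∀ s ∈ Set.Icc (0 : ℝ) t,
      HasDerivWithinAt hU'
        (-∑ j : Fin n, 1 / (hU' s - (U j (t - s) : ℂ)))
        (Set.Icc (0 : ℝ) t) s)
    (M : ℝ)
    (hM : ∀ s ∈ Set.Icc (0 : ℝ) t,
      |V₁ s - U k s| ≤ M ∧ |V₂ s - U ⟨(k : ℕ) + 1, hk⟩ s| ≤ M)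
    (φbar : ℝ) (hφ0 : 0 ≤ φbar)
    (hφ : ∀ s ∈ Set.Icc (0 : ℝ) t,
      ∑ j ∈ (Finset.univ.erase k).erase ⟨(k : ℕ) + 1, hk⟩,
        1 / ‖hU' s - (U j (t - s) : ℂ)‖ ≤ φbar) :
    ‖h t - hU' t‖ ≤ (2 * M / yhat ^ 2 + φbar) * Real.exp (2 / yhat ^ 2) := by
  have him : ∀ s ∈ Icc 0 t, yhat ≤ (h s).im := by
    refine le_im_of_hasDerivWithinAt hy hsol (fun s _ hs => ?_) (hh0 ▸ hz)
    rw [sub_eq_add_neg, Complex.add_im]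
    exact add_nonneg (Complex.im_neg_one_div_sub_ofReal_nonneg hs.le _)
      (Complex.im_neg_one_div_sub_ofReal_nonneg hs.le _)
  have himU : ∀ s ∈ Icc 0 t, yhat ≤ (hU' s).im :=
    le_im_of_hasDerivWithinAt hy hUsol
      (fun s _ hs => Complex.im_neg_sum_one_div_sub_ofReal_nonneg _ hs.le _) (hhU0 ▸ hz)
  have hts : ∀ s ∈ Ico 0 t, t - s ∈ Icc 0 t := fun s hs =>
    ⟨by linarith [hs.2], by linarith [hs.1]⟩
  have hM0 : 0 ≤ M := (abs_nonneg _).trans (hM 0 ⟨le_rfl, ht0⟩).1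
  have hgronwall := norm_sub_le_gronwallBound_of_hasDerivWithinAt hsol hUsol
    (fun s hs => norm_sub_sum_one_div_sub_ofReal_le (Fin.ne_of_val_ne (Nat.succ_ne_self _)) hy
      (him s (Ico_subset_Icc_self hs)) (himU s (Ico_subset_Icc_self hs)) (hM _ (hts s hs)).1
      (hM _ (hts s hs)).2 (hφ s (Ico_subset_Icc_self hs))) t ⟨ht0, le_rfl⟩
  rw [hh0, hhU0, sub_self, norm_zero, sub_zero] at hgronwall
  calc ‖h t - hU' t‖
      ≤ (2 * M / yhat ^ 2 + φbar) * t * Real.exp (2 / yhat ^ 2 * t) :=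
        hgronwall.trans (gronwallBound_zero_le (by positivity) (by positivity))
    _ ≤ (2 * M / yhat ^ 2 + φbar) * 1 * Real.exp (2 / yhat ^ 2 * 1) := by gcongr
    _ = (2 * M / yhat ^ 2 + φbar) * Real.exp (2 / yhat ^ 2) := by simp only [mul_one]

/-- Grönwall stability of the reverse Loewner flow.
Fix `t ∈ [0,1]`, `n ≥ 2`, an index `k` with `k+1 < n`, and `ŷ > 0`. Let `h`
and `hU` solve the reverse Loewner equations with drivers `(V₁, V₂)` and
`(U₁, …, U_n)` respectively, started at the same point `z` with `Im z ≥ ŷ`.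
If `M` bounds `|V₁(s) - U_k(s)|` and `|V₂(s) - U_{k+1}(s)|` on `[0,t]`, and
`φ̄ ≥ 0` bounds `Σ_{j ≠ k, k+1} 1/|hU_s - U_j(t-s)|` along the trajectory,
then `|h_t - hU_t| ≤ (2M/ŷ² + φ̄)·exp(2/ŷ²)`. -/
theorem stmt10 (t : ℝ) (ht0 : 0 ≤ t) (ht1 : t ≤ 1)
    (n : ℕ) (hn : 2 ≤ n) (k : Fin n) (hk : (k : ℕ) + 1 < n)
    (yhat : ℝ) (hy : 0 < yhat)
    (V₁ V₂ : ℝ → ℝ) (U : Fin n → ℝ → ℝ)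
    (hV₁ : ContinuousOn V₁ (Set.Icc 0 t)) (hV₂ : ContinuousOn V₂ (Set.Icc 0 t))
    (hU : ∀ j, ContinuousOn (U j) (Set.Icc 0 t))
    (z : ℂ) (hz : yhat ≤ z.im)
    (h hU' : ℝ → ℂ) (hh0 : h 0 = z) (hhU0 : hU' 0 = z)
    (hsol : ∀ s ∈ Set.Icc (0 : ℝ) t,
      HasDerivWithinAt h
        (-(1 / (h s - (V₁ (t - s) : ℂ))) - 1 / (h s - (V₂ (t - s) : ℂ)))
        (Set.Icc (0 : ℝ) t) s)
    (hUsol : ∀ s ∈ Set.Icc (0 : ℝ) t,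
      HasDerivWithinAt hU'
        (-∑ j : Fin n, 1 / (hU' s - (U j (t - s) : ℂ)))
        (Set.Icc (0 : ℝ) t) s)
    (M : ℝ)
    (hM : ∀ s ∈ Set.Icc (0 : ℝ) t,
      |V₁ s - U k s| ≤ M ∧ |V₂ s - U ⟨(k : ℕ) + 1, hk⟩ s| ≤ M)
    (φbar : ℝ) (hφ0 : 0 ≤ φbar)
    (hφ : ∀ s ∈ Set.Icc (0 : ℝ) t,
      ∑ j ∈ (Finset.univ.erase k).erase ⟨(k : ℕ) + 1, hk⟩,
        1 / ‖hU' s - (U j (t - s) : ℂ)‖ ≤ φbar) :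
    ‖h t - hU' t‖ ≤ (2 * M / yhat ^ 2 + φbar) * Real.exp (2 / yhat ^ 2) :=
  stmt10_general t ht0 ht1 n k hk yhat hy V₁ V₂ U z hz h hU' hh0 hhU0 hsol hUsol M hM φbar hφ0 hφ
end
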